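/- Define on the closure of the two-dimensional neck region Ω_{2R} the Keller-type function k(x) = (x₂ − (h₁(x₁) − h₂(x₁))/2)/δ(x₁), the functions F(x₁) = −3(h₁ − h₂)(x₁)/δ(x₁) and G(x) = (h₁' − h₂')(x₁) k(x) + (h₁' + h₂')(x₁)/2 + 3(h₁ − h₂)(x₁) ∂_{x₁}k(x), and the vector field v₁¹(x) = (k(x) + 1/2, 0)ᵀ + (F(x₁), G(x))ᵀ (k(x)² − 1/4). Then v₁¹ is divergence free in Ω_{2R} (∇·v₁¹ = 0), and it attains the boundary values v₁¹ = (1, 0)ᵀ on Γ_{2R}^+ and v₁¹ = 0 on Γ_{2R}^−. -/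

import Mathlib

/-!
With `q = h₁ - h₂`, the Keller function `k = (x₂ - q/2)/δ` is affine in `x₂` and equals `±1/2` on the
two boundary graphs, where therefore `k² - 1/4` vanishes and `v₁¹ = (k + 1/2, 0)`. For the divergence,
`∂₂k = 1/δ`, `∂₁k = -(q'/2 + k δ')/δ` and `∂₂∂₁k = -δ'/δ²`: the `3q ∂₁k` part of `G` cancels the
`F ∂₁k` term, and the rest of `∂₁(F (k² - 1/4)) + ∂₂(G (k² - 1/4))` is `(q'/2 + k δ')/δ = -∂₁k`.
-/

open Set

noncomputable section

/-- Points of the plane. -/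
abbrev Pt : Type := ℝ × ℝ

/-- Partial derivative in the first variable. -/
def pd1 (f : Pt → ℝ) (x : Pt) : ℝ := deriv (fun t => f (t, x.2)) x.1

/-- Partial derivative in the second variable. -/
def pd2 (f : Pt → ℝ) (x : Pt) : ℝ := deriv (fun t => f (x.1, t)) x.2

def divergence (v : Pt → Pt) (x : Pt) : ℝ :=
  pd1 (fun y => (v y).1) x + pd2 (fun y => (v y).2) x

def keller (q δ : ℝ → ℝ) (x : Pt) : ℝ := (x.2 - q x.1 / 2) / δ x.1

/-- The field `v₁¹` of the neck, written with `q = h₁ - h₂`, the width `δ`, and functions `q'`, `δ'`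
standing for their derivatives. -/
def kellerField (q δ q' δ' : ℝ → ℝ) (x : Pt) : Pt :=
  (keller q δ x + 1 / 2 + -3 * q x.1 / δ x.1 * (keller q δ x ^ 2 - 1 / 4),
    (q' x.1 * keller q δ x + δ' x.1 / 2 + 3 * q x.1 * pd1 (keller q δ) x) *
      (keller q δ x ^ 2 - 1 / 4))

section Keller

variable {q δ : ℝ → ℝ}

theorem keller_eq_of_sub_eq_mul {x : Pt} {c : ℝ} (hδ : δ x.1 ≠ 0)
    (h : x.2 - q x.1 / 2 = c * δ x.1) : keller q δ x = c := by
  rw [keller, h, mul_div_cancel_right₀ _ hδ]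

theorem hasDerivAt_keller_snd (x₁ t : ℝ) :
    HasDerivAt (fun s => keller q δ (x₁, s)) (δ x₁)⁻¹ t := by
  simpa [keller, div_eq_mul_inv] using
    ((hasDerivAt_id t).sub_const (q x₁ / 2)).mul_const (δ x₁)⁻¹

theorem hasDerivAt_keller_fst {q' δ' x₁ : ℝ} (hq : HasDerivAt q q' x₁) (hδ : HasDerivAt δ δ' x₁)
    (hδ0 : δ x₁ ≠ 0) (t : ℝ) :
    HasDerivAt (fun s => keller q δ (s, t)) (-(q' / 2 + keller q δ (x₁, t) * δ') / δ x₁) x₁ := by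
  refine (((hq.div_const 2).const_sub t).div hδ hδ0).congr_deriv ?_
  simp only [keller]
  field_simp
  ring

theorem pd1_keller {q' δ' x₁ : ℝ} (hq : HasDerivAt q q' x₁) (hδ : HasDerivAt δ δ' x₁)
    (hδ0 : δ x₁ ≠ 0) (t : ℝ) :
    pd1 (keller q δ) (x₁, t) = -(q' / 2 + keller q δ (x₁, t) * δ') / δ x₁ :=
  (hasDerivAt_keller_fst hq hδ hδ0 t).deriv

theorem hasDerivAt_pd1_keller_snd {q' δ' x₁ : ℝ} (hq : HasDerivAt q q' x₁)
    (hδ : HasDerivAt δ δ' x₁) (hδ0 : δ x₁ ≠ 0) (t : ℝ) :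
    HasDerivAt (fun s => pd1 (keller q δ) (x₁, s)) (-δ' / δ x₁ ^ 2) t := by
  rw [funext (pd1_keller hq hδ hδ0)]
  refine ((((hasDerivAt_keller_snd x₁ t).mul_const δ').const_add (q' / 2)).neg.div_const
    (δ x₁)).congr_deriv ?_
  field_simp

end Keller

section KellerField

variable {q δ q' δ' : ℝ → ℝ} {x : Pt}

theorem kellerField_of_keller_eq_half (h : keller q δ x = 1 / 2) :
    kellerField q δ q' δ' x = (1, 0) := by
  simp only [kellerField, h]
  norm_num

theorem kellerField_of_keller_eq_neg_half (h : keller q δ x = -(1 / 2)) :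
    kellerField q δ q' δ' x = 0 := by
  simp only [kellerField, h]
  norm_num [Prod.ext_iff]

theorem divergence_kellerField {x₁ x₂ : ℝ} (hq : HasDerivAt q (q' x₁) x₁)
    (hδ : HasDerivAt δ (δ' x₁) x₁) (hδ0 : δ x₁ ≠ 0) :
    divergence (kellerField q δ q' δ') (x₁, x₂) = 0 := by
  have hk₁ := hasDerivAt_keller_fst hq hδ hδ0 x₂
  have hk₂ := hasDerivAt_keller_snd (q := q) (δ := δ) x₁ x₂
  have hk₁₂ := hasDerivAt_pd1_keller_snd hq hδ hδ0 x₂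
  have hfst : HasDerivAt (fun s => (kellerField q δ q' δ' (s, x₂)).1) _ x₁ :=
    (hk₁.add_const (1 / 2)).add
      (((hq.const_mul (-3)).div hδ hδ0).mul ((hk₁.pow 2).sub_const (1 / 4)))
  have hsnd : HasDerivAt (fun t => (kellerField q δ q' δ' (x₁, t)).2) _ x₂ :=
    (((hk₂.const_mul (q' x₁)).add_const (δ' x₁ / 2)).add (hk₁₂.const_mul (3 * q x₁))).mul
      ((hk₂.pow 2).sub_const (1 / 4))
  show deriv (fun s => (kellerField q δ q' δ' (s, x₂)).1) x₁ +
    deriv (fun t => (kellerField q δ q' δ' (x₁, t)).2) x₂ = 0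
  rw [hfst.deriv, hsnd.deriv]
  simp only [Pi.add_apply, Pi.div_apply, pd1_keller hq hδ hδ0]
  field_simp
  ring

end KellerField

theorem ContDiffOn.hasDerivAt_of_abs_lt {n : WithTop ℕ∞} {f : ℝ → ℝ} {r x : ℝ}
    (hf : ContDiffOn ℝ (n + 1) f (Icc (-r) r)) (hx : |x| < r) : HasDerivAt f (deriv f x) x :=
  ((hf.differentiableOn (by simp)).differentiableAt
    (Icc_mem_nhds (abs_lt.1 hx).1 (abs_lt.1 hx).2)).hasDerivAt

theorem v11_divfree_and_boundary_general (m : ℕ) (ε R : ℝ)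
    (h1 h2 : ℝ → ℝ)
    (hh1 : ContDiffOn ℝ (m + 1) h1 (Icc (-(2 * R)) (2 * R)))
    (hh2 : ContDiffOn ℝ (m + 1) h2 (Icc (-(2 * R)) (2 * R)))
    (hord : ∀ x₁ : ℝ, |x₁| ≤ 2 * R → -(ε / 2) - h2 x₁ < ε / 2 + h1 x₁)
    -- the vertical width δ
    (δ : ℝ → ℝ) (hδ : δ = fun x₁ => ε + h1 x₁ + h2 x₁)
    -- the Keller-type function k
    (k : Pt → ℝ) (hk : k = fun x => (x.2 - (h1 x.1 - h2 x.1) / 2) / δ x.1)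
    -- the correctors F and G
    (F : ℝ → ℝ) (hF : F = fun x₁ => -3 * (h1 x₁ - h2 x₁) / δ x₁)
    (G : Pt → ℝ) (hG : G = fun x => (deriv h1 x.1 - deriv h2 x.1) * k x +
      (deriv h1 x.1 + deriv h2 x.1) / 2 + 3 * (h1 x.1 - h2 x.1) * pd1 k x)
    -- the auxiliary vector field v₁¹
    (v : Pt → Pt) (hv : v = fun x =>
      ((k x + 1 / 2 + F x.1 * (k x ^ 2 - 1 / 4), G x * (k x ^ 2 - 1 / 4)) : Pt))
    -- the neck region Ω_{2R}
    (Ω2R : Set Pt) (hΩ : Ω2R =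
      {x : Pt | -(ε / 2) - h2 x.1 < x.2 ∧ x.2 < ε / 2 + h1 x.1 ∧ |x.1| < 2 * R}) :
    (∀ x ∈ Ω2R, pd1 (fun y => (v y).1) x + pd2 (fun y => (v y).2) x = 0) ∧
    (∀ x₁ : ℝ, |x₁| < 2 * R → v (x₁, ε / 2 + h1 x₁) = ((1 : ℝ), (0 : ℝ))) ∧
    (∀ x₁ : ℝ, |x₁| < 2 * R → v (x₁, -(ε / 2) - h2 x₁) = (0 : Pt)) := by
  have hv' : v = kellerField (fun t => h1 t - h2 t) (fun t => ε + h1 t + h2 t)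
      (fun t => deriv h1 t - deriv h2 t) (fun t => deriv h1 t + deriv h2 t) := by
    subst_vars
    rfl
  subst hv' hΩ
  have hδ0 : ∀ x₁ : ℝ, |x₁| < 2 * R → ε + h1 x₁ + h2 x₁ ≠ 0 := fun x₁ hx₁ => by
    linarith [hord x₁ hx₁.le]
  refine ⟨?_, fun x₁ hx₁ => ?_, fun x₁ hx₁ => ?_⟩
  · rintro ⟨x₁, x₂⟩ ⟨-, -, hx₁⟩
    have hd1 := hh1.hasDerivAt_of_abs_lt hx₁
    have hd2 := hh2.hasDerivAt_of_abs_lt hx₁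
    exact divergence_kellerField (hd1.sub hd2) ((hd1.const_add ε).add hd2) (hδ0 x₁ hx₁)
  · exact kellerField_of_keller_eq_half (keller_eq_of_sub_eq_mul (hδ0 x₁ hx₁) (by ring))
  · exact kellerField_of_keller_eq_neg_half (keller_eq_of_sub_eq_mul (hδ0 x₁ hx₁) (by ring))

/-- the auxiliary vector field
`v₁¹ = (k + 1/2, 0)ᵀ + (F, G)ᵀ (k² − 1/4)` is divergence free in the neck region Ω_{2R}
and attains the boundary values (1,0) on Γ_{2R}⁺ and 0 on Γ_{2R}⁻. -/
theorem v11_divfree_and_boundary (m : ℕ) (ε κ R : ℝ)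
    (hε : 0 < ε) (hε' : ε < 1 / 2) (hκ : 0 < κ) (hR : 0 < R)
    (h1 h2 : ℝ → ℝ)
    (hh1 : ContDiffOn ℝ (m + 1) h1 (Icc (-(2 * R)) (2 * R)))
    (hh2 : ContDiffOn ℝ (m + 1) h2 (Icc (-(2 * R)) (2 * R)))
    (h10 : h1 0 = 0) (h20 : h2 0 = 0)
    (h1d0 : deriv h1 0 = 0) (h2d0 : deriv h2 0 = 0)
    (hord : ∀ x₁ : ℝ, |x₁| ≤ 2 * R → -(ε / 2) - h2 x₁ < ε / 2 + h1 x₁)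
    (hgap : ∀ x₁ : ℝ, |x₁| ≤ 2 * R → κ * x₁ ^ 2 ≤ h1 x₁ + h2 x₁)
    -- the vertical width δ
    (δ : ℝ → ℝ) (hδ : δ = fun x₁ => ε + h1 x₁ + h2 x₁)
    -- the Keller-type function k
    (k : Pt → ℝ) (hk : k = fun x => (x.2 - (h1 x.1 - h2 x.1) / 2) / δ x.1)
    -- the correctors F and G
    (F : ℝ → ℝ) (hF : F = fun x₁ => -3 * (h1 x₁ - h2 x₁) / δ x₁)
    (G : Pt → ℝ) (hG : G = fun x => (deriv h1 x.1 - deriv h2 x.1) * k x +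
      (deriv h1 x.1 + deriv h2 x.1) / 2 + 3 * (h1 x.1 - h2 x.1) * pd1 k x)
    -- the auxiliary vector field v₁¹
    (v : Pt → Pt) (hv : v = fun x =>
      ((k x + 1 / 2 + F x.1 * (k x ^ 2 - 1 / 4), G x * (k x ^ 2 - 1 / 4)) : Pt))
    -- the neck region Ω_{2R}
    (Ω2R : Set Pt) (hΩ : Ω2R =
      {x : Pt | -(ε / 2) - h2 x.1 < x.2 ∧ x.2 < ε / 2 + h1 x.1 ∧ |x.1| < 2 * R}) :
    (∀ x ∈ Ω2R, pd1 (fun y => (v y).1) x + pd2 (fun y => (v y).2) x = 0) ∧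
    (∀ x₁ : ℝ, |x₁| < 2 * R → v (x₁, ε / 2 + h1 x₁) = ((1 : ℝ), (0 : ℝ))) ∧
    (∀ x₁ : ℝ, |x₁| < 2 * R → v (x₁, -(ε / 2) - h2 x₁) = (0 : Pt)) :=
  v11_divfree_and_boundary_general m ε R h1 h2 hh1 hh2 hord δ hδ k hk F hF G hG v hv Ω2R hΩ

end
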